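/- For scalars λ and an r×r matrix A over a commutative ring, P^k(λ·Id_r + A) = Σ_{j=0}^{k} binom(r−j, k−j) · λ^{k−j} · P^j(A), for every 0 ≤ k ≤ r. -/

import Mathlib

/-!
Substituting `t ↦ t + λ` in `det(A + t·Id)` gives `det((λ·Id + A) + t·Id)`, so the generating
polynomial of the `P^k(λ·Id + A)` is the Taylor shift by `λ` of that of the `P^k(A)`. Expanding
`(t + λ)^m` binomially and comparing coefficients of `t^(r-k)` gives the formula.
-/

open Polynomial Matrix Finset

theorem det_map_smul_one_add_add_X_smul_one {R n : Type*} [CommRing R] [Fintype n]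
    [DecidableEq n] (lam : R) (A : Matrix n n R) :
    det ((lam • (1 : Matrix n n R) + A).map C + (X : R[X]) • 1) =
      (det (A.map C + (X : R[X]) • 1)).comp (X + C lam) := by
  rw [← coe_compRingHom_apply, RingHom.map_det]
  congr 1
  ext i j : 1
  rcases eq_or_ne i j with rfl | hij
  · simp only [RingHom.mapMatrix_apply, coe_compRingHom, map_apply, Matrix.add_apply,
      Matrix.smul_apply, one_apply_eq, smul_eq_mul, mul_one, C_comp, X_comp, map_add]
    ring
  · simp [one_apply_ne hij]

theorem coeff_sum_range_C_mul_X_pow_sub {R : Type*} [CommRing R] (c : ℕ → R) {r k : ℕ}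
    (hk : k ≤ r) :
    (∑ n ∈ range (r + 1), C (c (r - n)) * X ^ n).coeff (r - k) = c k := by
  simp only [finsetSum_coeff, coeff_C_mul_X_pow]
  rw [sum_ite_eq, if_pos (mem_range.2 (by omega)), Nat.sub_sub_self hk]

theorem coeff_sum_range_C_mul_X_add_C_pow_sub {R : Type*} [CommRing R] (c : ℕ → R) (lam : R)
    {r k : ℕ} (hk : k ≤ r) :
    (∑ m ∈ range (r + 1), C (c (r - m)) * (X + C lam) ^ m).coeff (r - k) =
      ∑ j ∈ range (k + 1), ((r - j).choose (k - j) : R) * lam ^ (k - j) * c j := by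
  simp only [finsetSum_coeff, coeff_C_mul, coeff_X_add_C_pow]
  rw [← sum_range_reflect, ← sum_subset (range_subset_range.mpr (by omega : k + 1 ≤ r + 1))]
  · refine sum_congr rfl fun j hj => ?_
    have hj : j ≤ k := by simpa [Nat.lt_succ_iff] using hj
    rw [show r + 1 - 1 - j = r - j by omega, show r - (r - j) = j by omega,
      show r - j - (r - k) = k - j by omega,
      Nat.choose_symm_of_eq_add (by omega : r - j = r - k + (k - j))]
    ring
  · intro j _ hj
    rw [Nat.choose_eq_zero_of_lt (by simp at *; omega)]
    simp

/-- For a scalar `λ` and an `r × r` matrix `A` over a commutative ring,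
`P^k(λ·Id_r + A) = ∑_{j=0}^{k} binom(r−j, k−j) λ^{k−j} P^j(A)` for every `0 ≤ k ≤ r`,
where `P^k` is defined by `det(A + t·Id_r) = ∑_{k=0}^{r} P^{r-k}(A) t^k`. -/
theorem stmt_3 {R : Type*} [CommRing R] (r : ℕ) (lam : R)
    (A : Matrix (Fin r) (Fin r) R)
    (P Q : ℕ → R)
    (hP : Matrix.det (A.map Polynomial.C + (Polynomial.X : R[X]) • 1) =
      ∑ k ∈ Finset.range (r + 1), Polynomial.C (P (r - k)) * Polynomial.X ^ k)
    (hQ : Matrix.det ((lam • (1 : Matrix (Fin r) (Fin r) R) + A).map Polynomial.C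
        + (Polynomial.X : R[X]) • 1) =
      ∑ k ∈ Finset.range (r + 1), Polynomial.C (Q (r - k)) * Polynomial.X ^ k)
    (k : ℕ) (hk : k ≤ r) :
    Q k = ∑ j ∈ Finset.range (k + 1),
      ((r - j).choose (k - j) : R) * lam ^ (k - j) * P j := by
  have hshift : ∑ n ∈ range (r + 1), C (Q (r - n)) * X ^ n =
      ∑ m ∈ range (r + 1), C (P (r - m)) * (X + C lam) ^ m := by
    simp [← hQ, det_map_smul_one_add_add_X_smul_one, hP, Polynomial.sum_comp]
  rw [← coeff_sum_range_C_mul_X_pow_sub Q hk, hshift,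
    coeff_sum_range_C_mul_X_add_C_pow_sub P lam hk]
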